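/- arXiv:1106.6304 — 3 statements merged into one kernel-verified Lean document; each statement's English description precedes it below -/
import Mathlib

section
/- Uniqueness of matching (pool semantics requirement 3): in an execution of a sequence of stack operations on the empty stack in which all pushed values are pairwise distinct, every value is returned by at most one pop operation. -/
inductive Op (α : Type*) where
  | push (v : α)
  | pop

def runRes {α : Type*} : List (Op α) → List α → List (Option α) × List α
  | [], S => ([], S)
  | Op.push v :: ops, S => runRes ops (v :: S)
  | Op.pop :: ops, [] =>
      (none :: (runRes ops ([] : List α)).1, (runRes ops ([] : List α)).2)
  | Op.pop :: ops, v :: S => (some v :: (runRes ops S).1, (runRes ops S).2)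

/-- The values pushed by a sequence of operations. -/
def pushedVals {α : Type*} (σ : List (Op α)) : List α :=
  σ.filterMap (fun o => match o with | Op.push v => some v | Op.pop => none)

/-- If all pushed values are pairwise distinct, then in an execution from the
empty stack every value is returned by at most one pop operation. -/
theorem pop_returns_at_most_once {α : Type*} [DecidableEq α] (σ : List (Op α))
    (hd : (pushedVals σ).Nodup) (v : α) :
    (runRes σ ([] : List α)).1.count (some v) ≤ 1 := by
  have key : ∀ (σ : List (Op α)) (S : List α),
      (runRes σ S).1.count (some v) ≤ (pushedVals σ).count v + S.count v := by
    intro σ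
    induction σ with
    | nil => intro S; simp [runRes]
    | cons o ops ih =>
      intro S
      cases o with
      | push w =>
        have := ih (w :: S)
        simp only [runRes, pushedVals, List.filterMap_cons] at *
        simp only [List.count_cons] at *
        omega
      | pop =>
        cases S with
        | nil =>
          have := ih ([] : List α)
          simp only [runRes, pushedVals, List.filterMap_cons] at *
          simp only [List.count_cons] at *
          simpa using this
        | cons w S' =>
          have := ih S'
          simp only [runRes, pushedVals, List.filterMap_cons] at *
          simp only [List.count_cons] at *
          have hiff : ((some v : Option α) = some w) ↔ (v = w) := by simp
          by_cases h : v = w <;> simp [h] at * <;> omega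
  have h1 := key σ ([] : List α)
  have h2 : (pushedVals σ).count v ≤ 1 := List.nodup_iff_count_le_one.1 hd v
  simp at h1
  omega
end

section
/- Elimination of multi-op lists: let P be a list of m distinct push operations (with values) and Q a list of n pop operations, and let k = min m n. Then the interleaving that alternates push Pᵢ immediately followed by pop Qᵢ for i = 1,...,k, executed on any stack S, leaves S unchanged except for pushing the values of the residue P_{k+1},...,P_m on top (if m > n), and each pop Qᵢ returns the value of push Pᵢ while any residue pops Q_{k+1},...,Q_n were not executed. -/
lemma runRes_pushes {α : Type*} (L : List α) (S : List α) :
    runRes (L.map Op.push) S = ([], L.reverse ++ S) := by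
  induction L generalizing S with
  | nil => simp [runRes]
  | cons a t ih => simp [runRes, ih]

lemma runRes_pairs {α : Type*} (T : List α) (rest : List (Op α)) (S : List α) :
    runRes (T.flatMap (fun v => [Op.push v, Op.pop]) ++ rest) S =
      (T.map some ++ (runRes rest S).1, (runRes rest S).2) := by
  induction T generalizing S with
  | nil => simp
  | cons a t ih =>
      rw [show ((a :: t).flatMap (fun v => [Op.push v, Op.pop]) ++ rest)
            = Op.push a :: Op.pop :: (t.flatMap (fun v => [Op.push v, Op.pop]) ++ rest) by simp]
      rw [runRes, runRes, ih]
      simp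

/-- Elimination of multi-op lists: alternating push Pᵢ, pop for
i = 1..k (k = min m n) followed by the push residue returns the value of Pᵢ
to the i-th pop, and leaves `S` unchanged except for the residue pushes. -/
theorem multiEliminate_spec {α : Type*} (P : List α) (hP : P.Nodup) (n : ℕ) (S : List α) :
    runRes
        ((P.take (min P.length n)).flatMap (fun v => [Op.push v, Op.pop]) ++
          (P.drop (min P.length n)).map Op.push) S =
      ((P.take (min P.length n)).map some, (P.drop (min P.length n)).reverse ++ S) := by
  rw [runRes_pairs, runRes_pushes]
  simp
end

section
/- Linearizing an eliminated push immediately before its matching eliminated pop is a legal stack linearization: if a history of stack operations has a legal sequential witness σ, then inserting the pair (push v, pop returning v) adjacently anywhere in σ yields a legal sequential witness for the history extended by these two operations, with the pop's return value v. -/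
/-- An event of a sequential stack history: a push, or a pop with its recorded
return value (`none` = empty indication). -/
inductive Ev (α : Type*) where
  | push (v : α)
  | pop (r : Option α)

/-- A history is legal from stack `S` if every pop's recorded return value is
the current top (or the empty indication on an empty stack). -/
def legalFrom {α : Type*} : List α → List (Ev α) → Prop
  | _, [] => True
  | S, Ev.push v :: h => legalFrom (v :: S) h
  | S, Ev.pop r :: h => r = S.head? ∧ legalFrom S.tail h


theorem aux_insert {α : Type*} (v : α) (σ₁ : List (Ev α)) : ∀ (S : List α) (σ₂ : List (Ev α)),
    legalFrom S (σ₁ ++ σ₂) →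
    legalFrom S (σ₁ ++ Ev.push v :: Ev.pop (some v) :: σ₂) := by
  induction σ₁ with
  | nil => intro S σ₂ h; exact ⟨rfl, h⟩
  | cons e t ih =>
    intro S σ₂ h
    cases e with
    | push w => exact ih _ _ h
    | pop r => exact ⟨h.1, ih _ _ h.2⟩

/-- Inserting an eliminated push immediately followed by its matching pop
(returning the pushed value) anywhere in a legal sequential history yields a
legal sequential history. -/
theorem insert_elimination_pair_legal {α : Type*} (v : α) (σ₁ σ₂ : List (Ev α))
    (h : legalFrom ([] : List α) (σ₁ ++ σ₂)) :
    legalFrom ([] : List α) (σ₁ ++ Ev.push v :: Ev.pop (some v) :: σ₂) := by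
  exact aux_insert v σ₁ [] σ₂ h
end
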